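/- arXiv:2103.14796 — 2 statements merged into one kernel-verified Lean document; each statement's English description precedes it below -/
import Mathlib

section
/- Under the minorization and boundedness condition ε η ≤ K(·)(x) ≤ γ η with 0 < ε < γ, the map Φ^K on probability measures admits a unique fixed point (invariant measure) ν_*, and for any initial probability measure ν_0, the iterates satisfy ||(Φ^K)^n(ν_0) − ν_*||_TV ≤ 2(1 − ε/γ)^n. -/
/-!
STATEMENT 3: Under the minorization and boundedness condition `ε η ≤ K(·)(x) ≤ γ η` with
`0 < ε < γ`, the normalized map `Φ^K` on probability measures admits a unique invariant
measure `ν_*`, and for any initial probability measure `ν₀`,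
`‖(Φ^K)^n(ν₀) − ν_*‖_TV ≤ 2(1 − ε/γ)^n`.
-/

open MeasureTheory ProbabilityTheory
open scoped ENNReal NNReal

noncomputable section

/-- The d-dimensional torus. -/
abbrev Torus (d : ℕ) := Fin d → AddCircle (1 : ℝ)

/-- Total variation distance between two (finite) measures:
`‖μ − ν‖_TV = 2 sup_S |μ(S) − ν(S)|`. -/
def tvDist {α : Type*} [MeasurableSpace α] (μ ν : Measure α) : ℝ :=
  2 * ⨆ S : {S : Set α // MeasurableSet S}, |(μ S.1).toReal - (ν S.1).toReal|

/-- The normalized map `Φ^K` on measures induced by a kernel `K`. -/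
def FKker {α : Type*} [MeasurableSpace α] (K : Kernel α α) (ν : Measure α) : Measure α :=
  ((ν.bind fun a => K a) Set.univ)⁻¹ • (ν.bind fun a => K a)

section Stmt3AuxSection

open Set Filter
open scoped Topology

namespace Stmt3Aux

variable {α : Type*} [MeasurableSpace α]

/-- Comparison of integrals of a bounded function against two finite measures with equal
total mass, in terms of a uniform bound on set differences (Hahn decomposition argument). -/
lemma hahn_comp (lam₁ lam₂ : Measure α) [IsFiniteMeasure lam₁] [IsFiniteMeasure lam₂]
    (hmass : lam₁ Set.univ = lam₂ Set.univ) {g : α → ℝ≥0∞} (hg : Measurable g)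
    {a b : ℝ≥0∞} (hab : a ≤ b) (hb : b ≠ ⊤) (hga : ∀ x, a ≤ g x) (hgb : ∀ x, g x ≤ b)
    {A : ℝ≥0∞} (hA : ∀ T, MeasurableSet T → lam₁ T ≤ lam₂ T + A) :
    ∫⁻ x, g x ∂lam₁ ≤ ∫⁻ x, g x ∂lam₂ + (b - a) * A := by
  obtain ⟨s, hs, h1, h2⟩ := MeasureTheory.hahn_decomposition (μ := lam₁) (ν := lam₂)
  set m := lam₁ s - lam₂ s with hm
  have hmA : m ≤ A := tsub_le_iff_right.mpr (by rw [add_comm]; exact hA s hs)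
  have hmtop : m ≠ ⊤ := (tsub_le_self.trans_lt (measure_lt_top lam₁ s)).ne
  have hatop : a ≠ ⊤ := (hab.trans_lt hb.lt_top).ne
  have le₁ : lam₂.restrict s ≤ lam₁.restrict s := by
    refine Measure.le_iff.mpr fun T hT => ?_
    rw [Measure.restrict_apply hT, Measure.restrict_apply hT]
    exact h1 _ (hT.inter hs) inter_subset_right
  have le₂ : lam₁.restrict sᶜ ≤ lam₂.restrict sᶜ := by
    refine Measure.le_iff.mpr fun T hT => ?_
    rw [Measure.restrict_apply hT, Measure.restrict_apply hT]
    exact h2 _ (hT.inter hs.compl) inter_subset_right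
  have hd₁ : lam₁.restrict s = (lam₁.restrict s - lam₂.restrict s) + lam₂.restrict s :=
    (Measure.sub_add_cancel_of_le le₁).symm
  have hd₂ : lam₂.restrict sᶜ = (lam₂.restrict sᶜ - lam₁.restrict sᶜ) + lam₁.restrict sᶜ :=
    (Measure.sub_add_cancel_of_le le₂).symm
  have hm₁ : (lam₁.restrict s - lam₂.restrict s) Set.univ = m := by
    rw [Measure.sub_apply MeasurableSet.univ le₁, Measure.restrict_apply_univ,
      Measure.restrict_apply_univ]
  have hm₂ : (lam₂.restrict sᶜ - lam₁.restrict sᶜ) Set.univ = m := by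
    rw [Measure.sub_apply MeasurableSet.univ le₂, Measure.restrict_apply_univ,
      Measure.restrict_apply_univ]
    have e : lam₁ s + lam₁ sᶜ = lam₂ s + lam₂ sᶜ := by
      rw [measure_add_measure_compl hs, measure_add_measure_compl hs, hmass]
    have f1 : lam₂ s ≤ lam₁ s := h1 s hs (subset_refl s)
    have f2 : lam₁ sᶜ ≤ lam₂ sᶜ := h2 sᶜ hs.compl (subset_refl _)
    have e' : (lam₁ s).toReal + (lam₁ sᶜ).toReal = (lam₂ s).toReal + (lam₂ sᶜ).toReal := by
      rw [← ENNReal.toReal_add (measure_ne_top _ _) (measure_ne_top _ _),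
        ← ENNReal.toReal_add (measure_ne_top _ _) (measure_ne_top _ _), e]
    rw [← ENNReal.toReal_eq_toReal_iff' ((tsub_le_self.trans_lt (measure_lt_top lam₂ sᶜ)).ne)
      ((tsub_le_self.trans_lt (measure_lt_top lam₁ s)).ne),
      ENNReal.toReal_sub_of_le f2 (measure_ne_top _ _),
      ENNReal.toReal_sub_of_le f1 (measure_ne_top _ _)]
    linarith
  have hX : ∫⁻ x in s, g x ∂lam₁ ≤ (∫⁻ x in s, g x ∂lam₂) + b * m := by
    conv_lhs => rw [hd₁]
    rw [lintegral_add_measure]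
    have : ∫⁻ x, g x ∂(lam₁.restrict s - lam₂.restrict s) ≤ b * m := by
      calc ∫⁻ x, g x ∂(lam₁.restrict s - lam₂.restrict s)
          ≤ ∫⁻ _, b ∂(lam₁.restrict s - lam₂.restrict s) := lintegral_mono hgb
        _ = b * m := by rw [lintegral_const, hm₁]
    rw [add_comm]
    exact add_le_add le_rfl this
  have hY : (∫⁻ x in sᶜ, g x ∂lam₁) + a * m ≤ ∫⁻ x in sᶜ, g x ∂lam₂ := by
    conv_rhs => rw [hd₂]
    rw [lintegral_add_measure]
    have : a * m ≤ ∫⁻ x, g x ∂(lam₂.restrict sᶜ - lam₁.restrict sᶜ) := by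
      calc a * m = ∫⁻ _, a ∂(lam₂.restrict sᶜ - lam₁.restrict sᶜ) := by
            rw [lintegral_const, hm₂]
        _ ≤ _ := lintegral_mono hga
    rw [add_comm]
    exact add_le_add this le_rfl
  have comb : (∫⁻ x, g x ∂lam₁) + a * m ≤ (∫⁻ x, g x ∂lam₂) + b * m := by
    rw [← lintegral_add_compl g hs (μ := lam₁), ← lintegral_add_compl g hs (μ := lam₂)]
    calc (∫⁻ x in s, g x ∂lam₁) + (∫⁻ x in sᶜ, g x ∂lam₁) + a * m
        = (∫⁻ x in s, g x ∂lam₁) + ((∫⁻ x in sᶜ, g x ∂lam₁) + a * m) := by rw [add_assoc]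
      _ ≤ ((∫⁻ x in s, g x ∂lam₂) + b * m) + (∫⁻ x in sᶜ, g x ∂lam₂) := add_le_add hX hY
      _ = (∫⁻ x in s, g x ∂lam₂) + (∫⁻ x in sᶜ, g x ∂lam₂) + b * m := by ring
  have hbm : b * m = (b - a) * m + a * m := by rw [← add_mul, tsub_add_cancel_of_le hab]
  rw [hbm, ← add_assoc] at comb
  have key : ∫⁻ x, g x ∂lam₁ ≤ (∫⁻ x, g x ∂lam₂) + (b - a) * m :=
    (ENNReal.add_le_add_iff_right (ENNReal.mul_ne_top hatop hmtop)).mp comb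
  exact key.trans (add_le_add le_rfl (mul_le_mul_right hmA _))


def KP (K : Kernel α α) : ℕ → Kernel α α
  | 0 => Kernel.id
  | n + 1 => (KP K n) ∘ₖ K

lemma KP_zero_apply (K : Kernel α α) (x : α) : KP K 0 x = Measure.dirac x := by
  simp [KP, Kernel.id, Kernel.deterministic_apply]

lemma KP_succ_apply (K : Kernel α α) [IsSFiniteKernel K] (n : ℕ) (x : α) {S : Set α}
    (hS : MeasurableSet S) :
    KP K (n + 1) x S = ∫⁻ y, KP K n y S ∂(K x) := by
  rw [show KP K (n+1) = (KP K n) ∘ₖ K from rfl, Kernel.comp_apply' _ _ _ hS]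

variable (K : Kernel α α) [IsFiniteKernel K] (η : Measure α) [IsProbabilityMeasure η]
  (ε γ : ℝ)

def KHyp : Prop :=
  ∀ x : α, ∀ φ : α → ℝ≥0∞, Measurable φ →
      (∃ Cφ : ℝ≥0∞, Cφ ≠ ⊤ ∧ ∀ y, φ y ≤ Cφ) →
      ENNReal.ofReal ε * ∫⁻ y, φ y ∂η ≤ ∫⁻ y, φ y ∂(K x) ∧
        ∫⁻ y, φ y ∂(K x) ≤ ENNReal.ofReal γ * ∫⁻ y, φ y ∂η

variable {K η ε γ}

lemma KP_univ_bounds (hK : KHyp K η ε γ) (n : ℕ) :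
    (∀ x, ENNReal.ofReal ε ^ n ≤ KP K n x Set.univ ∧
      KP K n x Set.univ ≤ ENNReal.ofReal γ ^ n) := by
  induction n with
  | zero => intro x; simp [KP_zero_apply]
  | succ n ih =>
    intro x
    have hmeas : Measurable fun y => KP K n y Set.univ :=
      Kernel.measurable_coe _ MeasurableSet.univ
    have hbdd : ∃ Cφ : ℝ≥0∞, Cφ ≠ ⊤ ∧ ∀ y, KP K n y Set.univ ≤ Cφ :=
      ⟨ENNReal.ofReal γ ^ n, ENNReal.pow_ne_top ENNReal.ofReal_ne_top, fun y => (ih y).2⟩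
    have h := hK x _ hmeas hbdd
    have hηlow : ENNReal.ofReal ε ^ n ≤ ∫⁻ y, KP K n y Set.univ ∂η := by
      calc ENNReal.ofReal ε ^ n = ∫⁻ _, ENNReal.ofReal ε ^ n ∂η := by simp
        _ ≤ _ := lintegral_mono fun y => (ih y).1
    have hηhigh : ∫⁻ y, KP K n y Set.univ ∂η ≤ ENNReal.ofReal γ ^ n := by
      calc ∫⁻ y, KP K n y Set.univ ∂η ≤ ∫⁻ _, ENNReal.ofReal γ ^ n ∂η :=
            lintegral_mono fun y => (ih y).2
        _ = ENNReal.ofReal γ ^ n := by simp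
    rw [KP_succ_apply K n x MeasurableSet.univ]
    refine ⟨?_, ?_⟩
    · calc ENNReal.ofReal ε ^ (n + 1) = ENNReal.ofReal ε * ENNReal.ofReal ε ^ n := by
            rw [pow_succ, mul_comm]
        _ ≤ ENNReal.ofReal ε * ∫⁻ y, KP K n y Set.univ ∂η := mul_le_mul_right hηlow _
        _ ≤ _ := h.1
    · calc ∫⁻ y, KP K n y Set.univ ∂(K x) ≤ ENNReal.ofReal γ * ∫⁻ y, KP K n y Set.univ ∂η :=
            h.2
        _ ≤ ENNReal.ofReal γ * ENNReal.ofReal γ ^ n := mul_le_mul_right hηhigh _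
        _ = ENNReal.ofReal γ ^ (n + 1) := by rw [pow_succ, mul_comm]

lemma hKset (hK : KHyp K η ε γ) {T : Set α} (hT : MeasurableSet T) (x : α) :
    ENNReal.ofReal ε * η T ≤ K x T ∧ K x T ≤ ENNReal.ofReal γ * η T := by
  have h := hK x (T.indicator 1) (measurable_one.indicator hT)
    ⟨1, ENNReal.one_ne_top, fun y => by
      classical by_cases hy : y ∈ T <;> simp [Set.indicator_apply, hy]⟩
  simpa [lintegral_indicator_one hT] using h

/-- The key Dobrushin-type contraction estimate for the `h`-transformed kernels. -/
lemma contraction_core (hε : 0 < ε) (hεγ : ε < γ) (hK : KHyp K η ε γ) : ∀ m : ℕ,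
    ∀ lam₁ lam₂ : Measure α, IsProbabilityMeasure lam₁ → IsProbabilityMeasure lam₂ →
    ∀ A : ℝ≥0∞, A ≤ 1 →
    (∀ T, MeasurableSet T → lam₁ T ≤ lam₂ T + A ∧ lam₂ T ≤ lam₁ T + A) →
    ∀ S : Set α, MeasurableSet S →
      ∫⁻ x, (KP K m x Set.univ)⁻¹ * KP K m x S ∂lam₁ ≤
        (∫⁻ x, (KP K m x Set.univ)⁻¹ * KP K m x S ∂lam₂) +
          (1 - ENNReal.ofReal ε / ENNReal.ofReal γ) ^ m * A := by
  have heE0 : ENNReal.ofReal ε ≠ 0 := (ENNReal.ofReal_pos.mpr hε).ne'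
  have hgE0 : ENNReal.ofReal γ ≠ 0 := (ENNReal.ofReal_pos.mpr (hε.trans hεγ)).ne'
  have hgEtop : ENNReal.ofReal γ ≠ ⊤ := ENNReal.ofReal_ne_top
  have heg : ENNReal.ofReal ε ≤ ENNReal.ofReal γ := ENNReal.ofReal_le_ofReal hεγ.le
  set eE := ENNReal.ofReal ε
  set gE := ENNReal.ofReal γ
  set δ := eE / gE with hδdef
  have hδ1 : δ ≤ 1 := by
    rw [hδdef, div_eq_mul_inv]
    calc eE * gE⁻¹ ≤ gE * gE⁻¹ := mul_le_mul_left heg _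
      _ = 1 := ENNReal.mul_inv_cancel hgE0 hgEtop
  have hδtop : δ ≠ ⊤ := (hδ1.trans_lt ENNReal.one_lt_top).ne
  intro m
  induction m with
  | zero =>
    intro lam₁ lam₂ hP1 hP2 A hA1 hA S hS
    have hint : ∀ lam : Measure α,
        ∫⁻ x, (KP K 0 x Set.univ)⁻¹ * KP K 0 x S ∂lam = lam S := by
      intro lam
      have : ∀ x, (KP K 0 x Set.univ)⁻¹ * KP K 0 x S = S.indicator 1 x := by
        intro x
        rw [KP_zero_apply]
        simp [Measure.dirac_apply' x hS]
      simp_rw [this]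
      exact lintegral_indicator_one hS
    rw [hint, hint, pow_zero, one_mul]
    exact (hA S hS).1
  | succ m IH =>
    intro lam₁ lam₂ hP1 hP2 A hA1 hA S hS
    haveI := hP1; haveI := hP2
    -- notation
    set hm : α → ℝ≥0∞ := fun y => KP K m y Set.univ with hhm
    have hmmeas : Measurable hm := Kernel.measurable_coe _ MeasurableSet.univ
    have hmlb : ∀ y, eE ^ m ≤ hm y := fun y => (KP_univ_bounds hK m y).1
    have hmub : ∀ y, hm y ≤ gE ^ m := fun y => (KP_univ_bounds hK m y).2
    have hm0 : ∀ y, hm y ≠ 0 := fun y =>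
      ((ENNReal.pow_pos (ENNReal.ofReal_pos.mpr hε) m).trans_le (hmlb y)).ne'
    have hmtop : ∀ y, hm y ≠ ⊤ :=
      fun y => ((hmub y).trans_lt (ENNReal.pow_ne_top hgEtop).lt_top).ne
    have h1lb : ∀ x, eE ^ (m+1) ≤ KP K (m+1) x Set.univ := fun x =>
      (KP_univ_bounds hK (m+1) x).1
    have h1ub : ∀ x, KP K (m+1) x Set.univ ≤ gE ^ (m+1) := fun x =>
      (KP_univ_bounds hK (m+1) x).2
    have h10 : ∀ x, KP K (m+1) x Set.univ ≠ 0 := fun x =>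
      ((ENNReal.pow_pos (ENNReal.ofReal_pos.mpr hε) (m+1)).trans_le (h1lb x)).ne'
    have h1top : ∀ x, KP K (m+1) x Set.univ ≠ ⊤ :=
      fun x => ((h1ub x).trans_lt (ENNReal.pow_ne_top hgEtop).lt_top).ne
    have hKsucc : ∀ x, KP K (m+1) x Set.univ = ∫⁻ y, hm y ∂(K x) := fun x =>
      KP_succ_apply K m x MeasurableSet.univ
    -- H and ρ
    set H : ℝ≥0∞ := ∫⁻ y, hm y ∂η with hHdef
    have hHub : H ≤ gE ^ m := by
      calc H ≤ ∫⁻ _, gE ^ m ∂η := lintegral_mono hmub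
        _ = gE ^ m := by simp
    have hHlb : eE ^ m ≤ H := by
      calc eE ^ m = ∫⁻ _, eE ^ m ∂η := by simp
        _ ≤ H := lintegral_mono hmlb
    have hH0 : H ≠ 0 :=
      ((ENNReal.pow_pos (ENNReal.ofReal_pos.mpr hε) m).trans_le hHlb).ne'
    have hHtop : H ≠ ⊤ := (hHub.trans_lt (ENNReal.pow_ne_top hgEtop).lt_top).ne
    set ρ : Set α → ℝ≥0∞ := fun T => H⁻¹ * ∫⁻ y in T, hm y ∂η with hρdef
    have hρle1 : ∀ T, ρ T ≤ 1 := by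
      intro T
      calc H⁻¹ * ∫⁻ y in T, hm y ∂η ≤ H⁻¹ * H :=
            mul_le_mul_right (setLIntegral_le_lintegral _ _) _
        _ = 1 := ENNReal.inv_mul_cancel hH0 hHtop
    have hρcompl : ∀ T, MeasurableSet T → ρ T + ρ Tᶜ = 1 := by
      intro T hT
      rw [hρdef]
      simp only
      rw [← mul_add, lintegral_add_compl _ hT, ENNReal.inv_mul_cancel hH0 hHtop]
    -- the backward transition "kernel"
    set Q : α → Measure α :=
      fun x => (KP K (m+1) x Set.univ)⁻¹ • ((K x).withDensity hm) with hQdef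
    have hQapp : ∀ (x : α) {T : Set α}, MeasurableSet T →
        Q x T = (KP K (m+1) x Set.univ)⁻¹ * ∫⁻ y in T, hm y ∂(K x) := by
      intro x T hT
      rw [hQdef]
      simp only [Measure.smul_apply, smul_eq_mul]
      rw [withDensity_apply _ hT]
    have hQTmeas : ∀ {T : Set α}, MeasurableSet T → Measurable fun x => Q x T := by
      intro T hT
      simp_rw [fun x => hQapp x hT]
      refine ((Kernel.measurable_coe _ MeasurableSet.univ).inv).mul ?_
      refine Measurable.setLIntegral_kernel_prod_right (κ := K) (f := fun _ y => hm y) ?_ hT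
      exact hmmeas.comp measurable_snd
    have hQmeas : Measurable Q :=
      Measure.measurable_of_measurable_coe _ fun T hT => hQTmeas hT
    have hQuniv : ∀ x, Q x Set.univ = 1 := by
      intro x
      rw [hQapp x MeasurableSet.univ, Measure.restrict_univ, ← hKsucc x]
      exact ENNReal.inv_mul_cancel (h10 x) (h1top x)
    -- Doeblin minorization of Q
    have hQlow : ∀ (x : α) {T : Set α}, MeasurableSet T → δ * ρ T ≤ Q x T := by
      intro x T hT
      have hbdd : ∃ Cφ : ℝ≥0∞, Cφ ≠ ⊤ ∧ ∀ y, T.indicator hm y ≤ Cφ := by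
        refine ⟨gE ^ m, ENNReal.pow_ne_top hgEtop, fun y => ?_⟩
        classical
        by_cases hy : y ∈ T <;> simp [Set.indicator_apply, hy, hmub y]
      have h := hK x (T.indicator hm) (hmmeas.indicator hT) hbdd
      rw [lintegral_indicator hT, lintegral_indicator hT] at h
      have i1 : eE * ∫⁻ y in T, hm y ∂η ≤ ∫⁻ y in T, hm y ∂(K x) := h.1
      have i2 : KP K (m+1) x Set.univ ≤ gE * H := by
        rw [hKsucc x]
        have h' := hK x hm hmmeas ⟨gE ^ m, ENNReal.pow_ne_top hgEtop, hmub⟩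
        exact h'.2
      have iinv : (gE * H)⁻¹ ≤ (KP K (m+1) x Set.univ)⁻¹ := ENNReal.inv_le_inv.mpr i2
      rw [hQapp x hT]
      calc δ * ρ T = (gE * H)⁻¹ * (eE * ∫⁻ y in T, hm y ∂η) := by
            rw [ENNReal.mul_inv (Or.inl hgE0) (Or.inl hgEtop), hδdef, div_eq_mul_inv, hρdef]
            ring
        _ ≤ (KP K (m+1) x Set.univ)⁻¹ * ∫⁻ y in T, hm y ∂(K x) := mul_le_mul' iinv i1
    have hQup : ∀ (x : α) {T : Set α}, MeasurableSet T → Q x T ≤ (1 - δ) + δ * ρ T := by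
      intro x T hT
      have hcompl : Q x T + Q x Tᶜ = Q x Set.univ := measure_add_measure_compl hT
      rw [hQuniv x] at hcompl
      have hδρtop : δ * ρ Tᶜ ≠ ⊤ :=
        ((mul_le_mul' hδ1 (hρle1 Tᶜ)).trans_lt (by norm_num : (1:ℝ≥0∞)*1 < ⊤)).ne
      have key : Q x T + δ * ρ Tᶜ ≤ ((1 - δ) + δ * ρ T) + δ * ρ Tᶜ := by
        calc Q x T + δ * ρ Tᶜ ≤ Q x T + Q x Tᶜ := add_le_add le_rfl (hQlow x hT.compl)
          _ = 1 := hcompl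
          _ = ((1 - δ) + δ * ρ T) + δ * ρ Tᶜ := by
              rw [add_assoc, ← mul_add, hρcompl T hT, mul_one, tsub_add_cancel_of_le hδ1]
      exact (ENNReal.add_le_add_iff_right hδρtop).mp key
    -- the pushed-forward measures
    set B₁ : Measure α := lam₁.bind Q with hB₁
    set B₂ : Measure α := lam₂.bind Q with hB₂
    have hBapp : ∀ (lam : Measure α) {T : Set α}, MeasurableSet T →
        lam.bind Q T = ∫⁻ x, Q x T ∂lam := by
      intro lam T hT
      exact Measure.bind_apply hT hQmeas.aemeasurable
    have hBprob : ∀ (lam : Measure α), IsProbabilityMeasure lam →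
        IsProbabilityMeasure (lam.bind Q) := by
      intro lam hlam
      haveI := hlam
      constructor
      rw [hBapp lam MeasurableSet.univ]
      simp_rw [hQuniv]
      simp
    haveI hBP1 : IsProbabilityMeasure B₁ := hBprob lam₁ hP1
    haveI hBP2 : IsProbabilityMeasure B₂ := hBprob lam₂ hP2
    -- key identity transporting the integral one step back
    have hψmeas : Measurable fun y => (KP K m y Set.univ)⁻¹ * KP K m y S :=
      ((Kernel.measurable_coe _ MeasurableSet.univ).inv).mul (Kernel.measurable_coe _ hS)
    have keyid : ∀ lam : Measure α,
        ∫⁻ y, (KP K m y Set.univ)⁻¹ * KP K m y S ∂(lam.bind Q) =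
          ∫⁻ x, (KP K (m+1) x Set.univ)⁻¹ * KP K (m+1) x S ∂lam := by
      intro lam
      rw [Measure.lintegral_bind hQmeas.aemeasurable hψmeas.aemeasurable]
      refine lintegral_congr fun x => ?_
      rw [hQdef]
      simp only [lintegral_smul_measure]
      rw [lintegral_withDensity_eq_lintegral_mul _ hmmeas hψmeas]
      have : ∀ y, (hm * fun y => (KP K m y Set.univ)⁻¹ * KP K m y S) y = KP K m y S := by
        intro y
        simp only [Pi.mul_apply]
        rw [← mul_assoc, ENNReal.mul_inv_cancel (hm0 y) (hmtop y), one_mul]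
      simp_rw [this]
      rw [← KP_succ_apply K m x hS, smul_eq_mul]
    -- B₁, B₂ are close
    have hBpair : ∀ T, MeasurableSet T → B₁ T ≤ B₂ T + (1 - δ) * A ∧
        B₂ T ≤ B₁ T + (1 - δ) * A := by
      intro T hT
      have hgmeas := hQTmeas hT
      have hab : δ * ρ T ≤ (1 - δ) + δ * ρ T := le_add_self
      have hb : (1 - δ) + δ * ρ T ≠ ⊤ := by
        refine ENNReal.add_ne_top.mpr ⟨?_, ?_⟩
        · exact (tsub_le_self.trans_lt ENNReal.one_lt_top).ne
        · exact ((mul_le_mul' hδ1 (hρle1 T)).trans_lt (by norm_num : (1:ℝ≥0∞)*1 < ⊤)).ne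
      have hsub : (1 - δ) + δ * ρ T - δ * ρ T = 1 - δ := by
        rw [ENNReal.add_sub_cancel_right]
        exact ((mul_le_mul' hδ1 (hρle1 T)).trans_lt (by norm_num : (1:ℝ≥0∞)*1 < ⊤)).ne
      have hmass12 : lam₁ Set.univ = lam₂ Set.univ := by
        rw [measure_univ, measure_univ]
      constructor
      · rw [hBapp lam₁ hT, hBapp lam₂ hT]
        have := hahn_comp lam₁ lam₂ hmass12 hgmeas hab hb
          (fun x => hQlow x hT) (fun x => hQup x hT) (fun T' hT' => (hA T' hT').1)
        rwa [hsub] at this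
      · rw [hBapp lam₁ hT, hBapp lam₂ hT]
        have := hahn_comp lam₂ lam₁ hmass12.symm hgmeas hab hb
          (fun x => hQlow x hT) (fun x => hQup x hT) (fun T' hT' => (hA T' hT').2)
        rwa [hsub] at this
    -- apply inductive hypothesis
    have hA'1 : (1 - δ) * A ≤ 1 := mul_le_one' tsub_le_self hA1
    have := IH B₁ B₂ hBP1 hBP2 ((1 - δ) * A) hA'1 hBpair S hS
    rw [keyid lam₁, keyid lam₂] at this
    calc ∫⁻ x, (KP K (m+1) x Set.univ)⁻¹ * KP K (m+1) x S ∂lam₁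
        ≤ (∫⁻ x, (KP K (m+1) x Set.univ)⁻¹ * KP K (m+1) x S ∂lam₂) +
          (1 - δ) ^ m * ((1 - δ) * A) := this
      _ = (∫⁻ x, (KP K (m+1) x Set.univ)⁻¹ * KP K (m+1) x S ∂lam₂) +
          (1 - δ) ^ (m + 1) * A := by rw [pow_succ]; ring_nf


-- iterate identities

lemma bindK_univ_bounds (hK : KHyp K η ε γ) (μ : Measure α) [IsProbabilityMeasure μ] :
    ENNReal.ofReal ε ≤ (μ.bind fun a => K a) Set.univ ∧
      (μ.bind fun a => K a) Set.univ ≤ ENNReal.ofReal γ := by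
  rw [Measure.bind_apply MeasurableSet.univ K.measurable.aemeasurable]
  constructor
  · calc ENNReal.ofReal ε = ∫⁻ _, ENNReal.ofReal ε ∂μ := by simp
      _ ≤ ∫⁻ x, K x Set.univ ∂μ := lintegral_mono fun x => by
          have := (hKset hK MeasurableSet.univ x).1
          simpa using this
  · calc ∫⁻ x, K x Set.univ ∂μ ≤ ∫⁻ _, ENNReal.ofReal γ ∂μ := lintegral_mono fun x => by
          have := (hKset hK MeasurableSet.univ x).2
          simpa using this
      _ = ENNReal.ofReal γ := by simp

lemma fk_prob (hε : 0 < ε) (hεγ : ε < γ) (hK : KHyp K η ε γ) (μ : Measure α)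
    [IsProbabilityMeasure μ] : IsProbabilityMeasure (FKker K μ) := by
  constructor
  have hb := bindK_univ_bounds hK μ
  have h0 : (μ.bind fun a => K a) Set.univ ≠ 0 :=
    ((ENNReal.ofReal_pos.mpr hε).trans_le hb.1).ne'
  have htop : (μ.bind fun a => K a) Set.univ ≠ ⊤ :=
    (hb.2.trans_lt ENNReal.ofReal_lt_top).ne
  rw [FKker, Measure.smul_apply, smul_eq_mul]
  exact ENNReal.inv_mul_cancel h0 htop

lemma iter_prob (hε : 0 < ε) (hεγ : ε < γ) (hK : KHyp K η ε γ) (μ : Measure α)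
    [IsProbabilityMeasure μ] (n : ℕ) : IsProbabilityMeasure ((FKker K)^[n] μ) := by
  induction n with
  | zero => simpa using ‹IsProbabilityMeasure μ›
  | succ n ih =>
    rw [Function.iterate_succ_apply']
    haveI := ih
    exact fk_prob hε hεγ hK _

lemma bind_smul_meas (c : ℝ≥0∞) (μ : Measure α) {f : α → Measure α} (hf : Measurable f) :
    ((c • μ).bind f) = c • (μ.bind f) := by
  ext s hs
  rw [Measure.bind_apply hs hf.aemeasurable, Measure.smul_apply, smul_eq_mul,
    Measure.bind_apply hs hf.aemeasurable, lintegral_smul_measure, smul_eq_mul]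

lemma norm_smul_cancel (c : ℝ≥0∞) (hc0 : c ≠ 0) (hctop : c ≠ ⊤) (m : Measure α) :
    ((c • m) Set.univ)⁻¹ • (c • m) = (m Set.univ)⁻¹ • m := by
  rw [Measure.smul_apply, smul_eq_mul, ENNReal.mul_inv (Or.inl hc0) (Or.inl hctop),
    smul_smul]
  congr 1
  rw [mul_comm c⁻¹ _, mul_assoc, ENNReal.inv_mul_cancel hc0 hctop, mul_one]

lemma bind_KP_zero (μ : Measure α) : (μ.bind fun x => KP K 0 x) = μ := by
  ext s hs
  rw [Measure.bind_apply hs (KP K 0).measurable.aemeasurable]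
  have : ∀ x, KP K 0 x s = s.indicator 1 x := by
    intro x
    rw [KP_zero_apply]
    exact Measure.dirac_apply' x hs
  simp_rw [this]
  exact lintegral_indicator_one hs

lemma bind_KP_succ (μ : Measure α) (n : ℕ) :
    ((μ.bind fun a => K a).bind fun x => KP K n x) = μ.bind fun x => KP K (n+1) x := by
  rw [Measure.bind_bind K.measurable.aemeasurable (KP K n).measurable.aemeasurable]
  refine congrArg _ ?_
  funext a
  rw [show KP K (n+1) = (KP K n) ∘ₖ K from rfl, Kernel.comp_apply]

lemma iterate_eq (hε : 0 < ε) (hεγ : ε < γ) (hK : KHyp K η ε γ) (n : ℕ) (μ : Measure α)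
    [IsProbabilityMeasure μ] :
    (FKker K)^[n] μ =
      ((μ.bind fun x => KP K n x) Set.univ)⁻¹ • (μ.bind fun x => KP K n x) := by
  induction n generalizing μ with
  | zero =>
    simp only [Function.iterate_zero, id_eq, bind_KP_zero]
    rw [measure_univ, inv_one, one_smul]
  | succ n ih =>
    rw [Function.iterate_succ_apply]
    haveI := fk_prob hε hεγ hK μ
    rw [ih (FKker K μ)]
    have hb := bindK_univ_bounds hK μ
    have h0 : (μ.bind fun a => K a) Set.univ ≠ 0 :=
      ((ENNReal.ofReal_pos.mpr hε).trans_le hb.1).ne'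
    have htop : (μ.bind fun a => K a) Set.univ ≠ ⊤ :=
      (hb.2.trans_lt ENNReal.ofReal_lt_top).ne
    have : (FKker K μ).bind (fun x => KP K n x) =
        ((μ.bind fun a => K a) Set.univ)⁻¹ • (μ.bind fun x => KP K (n+1) x) := by
      rw [FKker, bind_smul_meas _ _ (KP K n).measurable, bind_KP_succ]
    rw [this]
    exact norm_smul_cancel _ (ENNReal.inv_ne_zero.mpr htop) (ENNReal.inv_ne_top.mpr h0) _

lemma bind_KP_univ_bounds (hK : KHyp K η ε γ) (n : ℕ) (μ : Measure α)
    [IsProbabilityMeasure μ] :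
    ENNReal.ofReal ε ^ n ≤ (μ.bind fun x => KP K n x) Set.univ ∧
      (μ.bind fun x => KP K n x) Set.univ ≤ ENNReal.ofReal γ ^ n := by
  rw [Measure.bind_apply MeasurableSet.univ (KP K n).measurable.aemeasurable]
  constructor
  · calc ENNReal.ofReal ε ^ n = ∫⁻ _, ENNReal.ofReal ε ^ n ∂μ := by simp
      _ ≤ _ := lintegral_mono fun x => (KP_univ_bounds hK n x).1
  · calc ∫⁻ x, KP K n x Set.univ ∂μ ≤ ∫⁻ _, ENNReal.ofReal γ ^ n ∂μ :=
        lintegral_mono fun x => (KP_univ_bounds hK n x).2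
      _ = _ := by simp

/-- The main n-step estimate, ENNReal form. -/
lemma main_est (hε : 0 < ε) (hεγ : ε < γ) (hK : KHyp K η ε γ) (n : ℕ)
    (μ ν : Measure α) [IsProbabilityMeasure μ] [IsProbabilityMeasure ν]
    {S : Set α} (hS : MeasurableSet S) :
    ((FKker K)^[n] μ) S ≤ ((FKker K)^[n] ν) S +
      (1 - ENNReal.ofReal ε / ENNReal.ofReal γ) ^ n := by
  have hKPlb := fun x => (KP_univ_bounds hK n x).1
  have hKPub := fun x => (KP_univ_bounds hK n x).2
  have hh0 : ∀ x, KP K n x Set.univ ≠ 0 := fun x =>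
    ((ENNReal.pow_pos (ENNReal.ofReal_pos.mpr hε) n).trans_le (hKPlb x)).ne'
  have hhtop : ∀ x, KP K n x Set.univ ≠ ⊤ := fun x =>
    ((hKPub x).trans_lt (ENNReal.pow_ne_top ENNReal.ofReal_ne_top).lt_top).ne
  have hmmeas : Measurable fun y => KP K n y Set.univ :=
    Kernel.measurable_coe _ MeasurableSet.univ
  -- hat measures
  have key : ∀ (lam : Measure α), IsProbabilityMeasure lam →
      (IsProbabilityMeasure
        (((lam.bind fun x => KP K n x) Set.univ)⁻¹ • lam.withDensity
            (fun x => KP K n x Set.univ)) ∧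
      ∫⁻ x, (KP K n x Set.univ)⁻¹ * KP K n x S
          ∂(((lam.bind fun x => KP K n x) Set.univ)⁻¹ • lam.withDensity
            (fun x => KP K n x Set.univ)) = ((FKker K)^[n] lam) S) := by
    intro lam hlam
    haveI := hlam
    have hZ := bind_KP_univ_bounds hK n lam
    have hZ0 : (lam.bind fun x => KP K n x) Set.univ ≠ 0 :=
      ((ENNReal.pow_pos (ENNReal.ofReal_pos.mpr hε) n).trans_le hZ.1).ne'
    have hZtop : (lam.bind fun x => KP K n x) Set.univ ≠ ⊤ :=
      (hZ.2.trans_lt (ENNReal.pow_ne_top ENNReal.ofReal_ne_top).lt_top).ne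
    have hZint : (lam.bind fun x => KP K n x) Set.univ = ∫⁻ x, KP K n x Set.univ ∂lam :=
      Measure.bind_apply MeasurableSet.univ (KP K n).measurable.aemeasurable
    constructor
    · constructor
      rw [Measure.smul_apply, smul_eq_mul, withDensity_apply _ MeasurableSet.univ,
        Measure.restrict_univ, ← hZint]
      exact ENNReal.inv_mul_cancel hZ0 hZtop
    · rw [lintegral_smul_measure,
        lintegral_withDensity_eq_lintegral_mul _ hmmeas
          (g := fun y => (KP K n y Set.univ)⁻¹ * KP K n y S) (((Kernel.measurable_coe _ MeasurableSet.univ).inv).mul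
            (Kernel.measurable_coe _ hS))]
      have : ∀ y, ((fun x => KP K n x Set.univ) *
          fun y => (KP K n y Set.univ)⁻¹ * KP K n y S) y = KP K n y S := by
        intro y
        simp only [Pi.mul_apply]
        rw [← mul_assoc, ENNReal.mul_inv_cancel (hh0 y) (hhtop y), one_mul]
      simp_rw [this]
      have hiter : ((FKker K)^[n] lam) S =
          ((lam.bind fun x => KP K n x) Set.univ)⁻¹ * (lam.bind fun x => KP K n x) S := by
        rw [iterate_eq hε hεγ hK n lam, Measure.smul_apply, smul_eq_mul]
      rw [hiter, Measure.bind_apply hS (KP K n).measurable.aemeasurable, smul_eq_mul]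
  obtain ⟨hμprob, hμid⟩ := key μ ‹_›
  obtain ⟨hνprob, hνid⟩ := key ν ‹_›
  have hA : ∀ T, MeasurableSet T →
      (((μ.bind fun x => KP K n x) Set.univ)⁻¹ • μ.withDensity
          (fun x => KP K n x Set.univ)) T ≤
        (((ν.bind fun x => KP K n x) Set.univ)⁻¹ • ν.withDensity
          (fun x => KP K n x Set.univ)) T + 1 ∧
      (((ν.bind fun x => KP K n x) Set.univ)⁻¹ • ν.withDensity
          (fun x => KP K n x Set.univ)) T ≤
        (((μ.bind fun x => KP K n x) Set.univ)⁻¹ • μ.withDensity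
          (fun x => KP K n x Set.univ)) T + 1 := by
    intro T hT
    constructor
    · refine le_trans ?_ le_add_self
      haveI := hμprob
      calc _ ≤ _ := measure_mono (Set.subset_univ T)
        _ = 1 := measure_univ
    · refine le_trans ?_ le_add_self
      haveI := hνprob
      calc _ ≤ _ := measure_mono (Set.subset_univ T)
        _ = 1 := measure_univ
  have := contraction_core hε hεγ hK n _ _ hμprob hνprob 1 le_rfl hA S hS
  rw [hμid, hνid, mul_one] at this
  exact this


-- real-valued estimates

lemma real_diff_le {a b : ℝ≥0∞} (ha : a ≠ ⊤) (hb : b ≠ ⊤) {t : ℝ} (ht : 0 ≤ t)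
    (h1 : a ≤ b + ENNReal.ofReal t) (h2 : b ≤ a + ENNReal.ofReal t) :
    |a.toReal - b.toReal| ≤ t := by
  rw [abs_sub_le_iff]
  constructor
  · have : a.toReal ≤ (b + ENNReal.ofReal t).toReal :=
      ENNReal.toReal_mono (ENNReal.add_ne_top.mpr ⟨hb, ENNReal.ofReal_ne_top⟩) h1
    rw [ENNReal.toReal_add hb ENNReal.ofReal_ne_top, ENNReal.toReal_ofReal ht] at this
    linarith
  · have : b.toReal ≤ (a + ENNReal.ofReal t).toReal :=
      ENNReal.toReal_mono (ENNReal.add_ne_top.mpr ⟨ha, ENNReal.ofReal_ne_top⟩) h2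
    rw [ENNReal.toReal_add ha ENNReal.ofReal_ne_top, ENNReal.toReal_ofReal ht] at this
    linarith

lemma cpow_eq (hε : 0 < ε) (hεγ : ε < γ) (n : ℕ) :
    (1 - ENNReal.ofReal ε / ENNReal.ofReal γ) ^ n = ENNReal.ofReal ((1 - ε / γ) ^ n) := by
  have hγ0 : (0:ℝ) < γ := hε.trans hεγ
  have h1 : ENNReal.ofReal ε / ENNReal.ofReal γ = ENNReal.ofReal (ε / γ) :=
    (ENNReal.ofReal_div_of_pos hγ0).symm
  have h2 : ENNReal.ofReal (1 - ε / γ) = 1 - ENNReal.ofReal (ε / γ) := by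
    rw [ENNReal.ofReal_sub 1 (div_nonneg hε.le hγ0.le), ENNReal.ofReal_one]
  rw [ENNReal.ofReal_pow (by
    have : ε / γ ≤ 1 := (div_le_one hγ0).mpr hεγ.le
    linarith) n, h2, h1]

lemma main_est_real (hε : 0 < ε) (hεγ : ε < γ) (hK : KHyp K η ε γ) (n : ℕ)
    (μ ν : Measure α) [IsProbabilityMeasure μ] [IsProbabilityMeasure ν]
    {S : Set α} (hS : MeasurableSet S) :
    |(((FKker K)^[n] μ) S).toReal - (((FKker K)^[n] ν) S).toReal| ≤ (1 - ε / γ) ^ n := by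
  have hγ0 : (0:ℝ) < γ := hε.trans hεγ
  have hc0 : (0:ℝ) ≤ 1 - ε / γ := by
    have : ε / γ ≤ 1 := (div_le_one hγ0).mpr hεγ.le
    linarith
  haveI := iter_prob hε hεγ hK μ n
  haveI := iter_prob hε hεγ hK ν n
  refine real_diff_le (measure_ne_top _ _) (measure_ne_top _ _) (pow_nonneg hc0 n) ?_ ?_
  · have := main_est hε hεγ hK n μ ν hS
    rwa [cpow_eq hε hεγ n] at this
  · have := main_est hε hεγ hK n ν μ hS
    rwa [cpow_eq hε hεγ n] at this

lemma fk_le_eta_real (hε : 0 < ε) (hεγ : ε < γ) (hK : KHyp K η ε γ) (μ : Measure α)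
    [IsProbabilityMeasure μ] {T : Set α} (hT : MeasurableSet T) :
    ((FKker K μ) T).toReal ≤ γ / ε * (η T).toReal := by
  have hγ0 : (0:ℝ) < γ := hε.trans hεγ
  have hZ := bindK_univ_bounds hK μ
  have heE0 : ENNReal.ofReal ε ≠ 0 := (ENNReal.ofReal_pos.mpr hε).ne'
  have hZinv : ((μ.bind fun a => K a) Set.univ)⁻¹ ≤ (ENNReal.ofReal ε)⁻¹ :=
    ENNReal.inv_le_inv.mpr hZ.1
  have hb : (μ.bind fun a => K a) T ≤ ENNReal.ofReal γ * η T := by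
    rw [Measure.bind_apply hT K.measurable.aemeasurable]
    calc ∫⁻ x, K x T ∂μ ≤ ∫⁻ _, ENNReal.ofReal γ * η T ∂μ :=
          lintegral_mono fun x => (hKset hK hT x).2
      _ = ENNReal.ofReal γ * η T := by simp
  have key : FKker K μ T ≤ (ENNReal.ofReal ε)⁻¹ * (ENNReal.ofReal γ * η T) := by
    rw [FKker, Measure.smul_apply, smul_eq_mul]
    exact mul_le_mul' hZinv hb
  have hfin : (ENNReal.ofReal ε)⁻¹ * (ENNReal.ofReal γ * η T) ≠ ⊤ :=
    ENNReal.mul_ne_top (ENNReal.inv_ne_top.mpr heE0)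
      (ENNReal.mul_ne_top ENNReal.ofReal_ne_top (measure_ne_top _ _))
  calc ((FKker K μ) T).toReal ≤ ((ENNReal.ofReal ε)⁻¹ * (ENNReal.ofReal γ * η T)).toReal :=
        ENNReal.toReal_mono hfin key
    _ = γ / ε * (η T).toReal := by
        rw [ENNReal.toReal_mul, ENNReal.toReal_mul, ENNReal.toReal_inv,
          ENNReal.toReal_ofReal hε.le, ENNReal.toReal_ofReal hγ0.le]
        ring


end Stmt3Aux

end Stmt3AuxSection

open Stmt3Aux Filter Set
open scoped Topology

theorem stmt3 {d : ℕ} (K : Kernel (Torus d) (Torus d)) [IsFiniteKernel K]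
    (η : Measure (Torus d)) [IsProbabilityMeasure η]
    (ε γ : ℝ) (hε : 0 < ε) (hεγ : ε < γ)
    (hK : ∀ x : Torus d, ∀ φ : Torus d → ℝ≥0∞, Measurable φ →
      (∃ Cφ : ℝ≥0∞, Cφ ≠ ⊤ ∧ ∀ y, φ y ≤ Cφ) →
      ENNReal.ofReal ε * ∫⁻ y, φ y ∂η ≤ ∫⁻ y, φ y ∂(K x) ∧
        ∫⁻ y, φ y ∂(K x) ≤ ENNReal.ofReal γ * ∫⁻ y, φ y ∂η) :
    ∃ νs : Measure (Torus d), IsProbabilityMeasure νs ∧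
      FKker K νs = νs ∧
      (∀ μ : Measure (Torus d), IsProbabilityMeasure μ → FKker K μ = μ → μ = νs) ∧
      ∀ ν₀ : Measure (Torus d), IsProbabilityMeasure ν₀ →
        ∀ n : ℕ, tvDist ((FKker K)^[n] ν₀) νs ≤ 2 * (1 - ε / γ) ^ n := by
  classical
  have hγ0 : (0:ℝ) < γ := hε.trans hεγ
  set c : ℝ := 1 - ε / γ with hcdef
  have hq1 : ε / γ < 1 := (div_lt_one hγ0).mpr hεγ
  have hq0 : 0 < ε / γ := div_pos hε hγ0
  have hc0 : 0 < c := by rw [hcdef]; linarith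
  have hc1 : c < 1 := by rw [hcdef]; linarith
  have hKH : KHyp K η ε γ := hK
  set σ : ℕ → Measure (Torus d) := fun n => (FKker K)^[n] η with hσ
  have hσprob : ∀ n, IsProbabilityMeasure (σ n) := fun n => iter_prob hε hεγ hKH η n
  -- uniform estimate between iterates
  have hest : ∀ (μ : Measure (Torus d)), IsProbabilityMeasure μ → ∀ n k : ℕ,
      ∀ S : Set (Torus d), MeasurableSet S →
      |(((FKker K)^[n] μ) S).toReal - ((σ (n + k)) S).toReal| ≤ c ^ n := by
    intro μ hμ n k S hS
    haveI := hμ; haveI := hσprob k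
    have hrw : σ (n + k) = (FKker K)^[n] (σ k) := Function.iterate_add_apply _ n k η
    rw [hrw]
    exact main_est_real hε hεγ hKH n μ (σ k) hS
  -- convergence of evaluations
  have hconv : ∀ S : Set (Torus d), MeasurableSet S →
      ∃ L : ℝ, Tendsto (fun n => ((σ n) S).toReal) atTop (𝓝 L) := by
    intro S hS
    apply cauchySeq_tendsto_of_complete
    apply cauchySeq_of_le_geometric c 1 hc1
    intro n
    rw [Real.dist_eq, one_mul]
    have := hest η inferInstance n 1 S hS
    exact this
  choose limF hlimF using hconv
  have hlim_nonneg : ∀ S (hS : MeasurableSet S), 0 ≤ limF S hS := fun S hS =>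
    ge_of_tendsto' (hlimF S hS) fun n => ENNReal.toReal_nonneg
  -- the candidate invariant measure
  have hm0 : (fun (S : Set (Torus d)) (hS : MeasurableSet S) =>
      ENNReal.ofReal (limF S hS)) ∅ MeasurableSet.empty = 0 := by
    have h0seq : Tendsto (fun n => ((σ n) (∅ : Set (Torus d))).toReal) atTop (𝓝 0) := by
      have : (fun n => ((σ n) (∅ : Set (Torus d))).toReal) = fun _ => 0 := by
        funext n; simp
      rw [this]; exact tendsto_const_nhds
    have := tendsto_nhds_unique (hlimF ∅ MeasurableSet.empty) h0seq
    simp [this]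
  have hmU : ∀ (f : ℕ → Set (Torus d)) (hfm : ∀ i, MeasurableSet (f i)),
      Pairwise (Function.onFun Disjoint f) →
      ENNReal.ofReal (limF (⋃ i, f i) (MeasurableSet.iUnion hfm)) =
        ∑' i, ENNReal.ofReal (limF (f i) (hfm i)) := by
    intro f hfm hdisj
    have hsum_η : (∑' i, η (f i)) ≠ ⊤ := by
      rw [← measure_iUnion hdisj hfm]; exact measure_ne_top _ _
    have hbound_sum : Summable (fun i => γ / ε * (η (f i)).toReal) :=
      (ENNReal.summable_toReal hsum_η).mul_left _
    have htend_i : ∀ i, Tendsto (fun n => ((σ n) (f i)).toReal) atTop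
        (𝓝 (limF (f i) (hfm i))) := fun i => hlimF (f i) (hfm i)
    have hdom : ∀ᶠ n in atTop, ∀ i,
        ‖((σ n) (f i)).toReal‖ ≤ γ / ε * (η (f i)).toReal := by
      filter_upwards [eventually_ge_atTop 1] with n hn
      intro i
      obtain ⟨m, rfl⟩ : ∃ m, n = m + 1 := ⟨n - 1, by omega⟩
      rw [Real.norm_eq_abs, abs_of_nonneg ENNReal.toReal_nonneg]
      have hr : σ (m + 1) = FKker K (σ m) := Function.iterate_succ_apply' _ m η
      rw [hr]
      haveI := hσprob m
      exact fk_le_eta_real hε hεγ hKH (σ m) (hfm i)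
    have h1 : Tendsto (fun n => ∑' i, ((σ n) (f i)).toReal) atTop
        (𝓝 (∑' i, limF (f i) (hfm i))) :=
      tendsto_tsum_of_dominated_convergence hbound_sum htend_i hdom
    have h2 : ∀ n, (∑' i, ((σ n) (f i)).toReal) = ((σ n) (⋃ i, f i)).toReal := by
      intro n
      rw [measure_iUnion hdisj hfm, ENNReal.tsum_toReal_eq fun i => measure_ne_top _ _]
    simp_rw [h2] at h1
    have hkey : limF (⋃ i, f i) (MeasurableSet.iUnion hfm) = ∑' i, limF (f i) (hfm i) :=
      tendsto_nhds_unique (hlimF _ (MeasurableSet.iUnion hfm)) h1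
    have hsum_limF : Summable fun i => limF (f i) (hfm i) := by
      refine Summable.of_norm_bounded hbound_sum fun i => ?_
      refine le_of_tendsto (htend_i i).norm ?_
      exact hdom.mono fun n h => h i
    rw [hkey]
    exact ENNReal.ofReal_tsum_of_nonneg (fun i => hlim_nonneg _ _) hsum_limF
  set νs : Measure (Torus d) :=
    Measure.ofMeasurable (fun S hS => ENNReal.ofReal (limF S hS)) hm0 hmU with hνsdef
  have hνs_app : ∀ (S : Set (Torus d)) (hS : MeasurableSet S),
      νs S = ENNReal.ofReal (limF S hS) := fun S hS =>
    Measure.ofMeasurable_apply S hS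
  have hνs_toReal : ∀ (S : Set (Torus d)) (hS : MeasurableSet S),
      (νs S).toReal = limF S hS := by
    intro S hS
    rw [hνs_app S hS, ENNReal.toReal_ofReal (hlim_nonneg S hS)]
  haveI hνsprob : IsProbabilityMeasure νs := by
    constructor
    have h1seq : Tendsto (fun n => ((σ n) (Set.univ : Set (Torus d))).toReal) atTop (𝓝 1) := by
      have : (fun n => ((σ n) (Set.univ : Set (Torus d))).toReal) = fun _ => 1 := by
        funext n
        haveI := hσprob n
        simp
      rw [this]; exact tendsto_const_nhds
    have := tendsto_nhds_unique (hlimF Set.univ MeasurableSet.univ) h1seq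
    rw [hνs_app Set.univ MeasurableSet.univ, this, ENNReal.ofReal_one]
  -- the general convergence estimate
  have hGEN : ∀ (μ : Measure (Torus d)), IsProbabilityMeasure μ → ∀ (n : ℕ)
      (S : Set (Torus d)), MeasurableSet S →
      |(((FKker K)^[n] μ) S).toReal - (νs S).toReal| ≤ c ^ n := by
    intro μ hμ n S hS
    have hshift : Tendsto (fun k => ((σ (k + n)) S).toReal) atTop (𝓝 (limF S hS)) :=
      (hlimF S hS).comp (tendsto_add_atTop_nat n)
    have hb : ∀ k, |(((FKker K)^[n] μ) S).toReal - ((σ (k + n)) S).toReal| ≤ c ^ n := by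
      intro k
      have := hest μ hμ n k S hS
      rwa [add_comm n k] at this
    have htend : Tendsto (fun k => |(((FKker K)^[n] μ) S).toReal - ((σ (k + n)) S).toReal|)
        atTop (𝓝 |(((FKker K)^[n] μ) S).toReal - limF S hS|) :=
      (tendsto_const_nhds.sub hshift).abs
    have := le_of_tendsto' htend hb
    rwa [hνs_toReal S hS]
  -- ENNReal closeness of σ n and νs
  have hAn : ∀ (n : ℕ) (T : Set (Torus d)), MeasurableSet T →
      σ n T ≤ νs T + ENNReal.ofReal (c ^ n) ∧ νs T ≤ σ n T + ENNReal.ofReal (c ^ n) := by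
    intro n T hT
    haveI := hσprob n
    have habs := hGEN η inferInstance n T hT
    rw [abs_sub_le_iff] at habs
    constructor
    · calc σ n T = ENNReal.ofReal ((σ n T).toReal) :=
            (ENNReal.ofReal_toReal (measure_ne_top _ _)).symm
        _ ≤ ENNReal.ofReal ((νs T).toReal + c ^ n) :=
            ENNReal.ofReal_le_ofReal (by have := habs.1; linarith)
        _ = νs T + ENNReal.ofReal (c ^ n) := by
            rw [ENNReal.ofReal_add ENNReal.toReal_nonneg (pow_nonneg hc0.le n),
              ENNReal.ofReal_toReal (measure_ne_top _ _)]
    · calc νs T = ENNReal.ofReal ((νs T).toReal) :=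
            (ENNReal.ofReal_toReal (measure_ne_top _ _)).symm
        _ ≤ ENNReal.ofReal ((σ n T).toReal + c ^ n) :=
            ENNReal.ofReal_le_ofReal (by have := habs.2; linarith)
        _ = σ n T + ENNReal.ofReal (c ^ n) := by
            rw [ENNReal.ofReal_add ENNReal.toReal_nonneg (pow_nonneg hc0.le n),
              ENNReal.ofReal_toReal (measure_ne_top _ _)]
  -- convergence of the kernel-integrated measures
  have hbind_ub : ∀ (μ : Measure (Torus d)), IsProbabilityMeasure μ →
      ∀ (T : Set (Torus d)), MeasurableSet T →
      (μ.bind fun a => K a) T ≤ ENNReal.ofReal γ := by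
    intro μ hμ T hT
    haveI := hμ
    rw [Measure.bind_apply hT K.measurable.aemeasurable]
    calc ∫⁻ x, K x T ∂μ ≤ ∫⁻ _, ENNReal.ofReal γ * η T ∂μ :=
          lintegral_mono fun x => (hKset hKH hT x).2
      _ = ENNReal.ofReal γ * η T := by simp
      _ ≤ ENNReal.ofReal γ * 1 := mul_le_mul_right prob_le_one _
      _ = ENNReal.ofReal γ := mul_one _
  have hbindTend : ∀ (T : Set (Torus d)), MeasurableSet T →
      Tendsto (fun n => (((σ n).bind fun a => K a) T).toReal) atTop
        (𝓝 (((νs.bind fun a => K a) T).toReal)) := by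
    intro T hT
    have hbound : ∀ n,
        |(((σ n).bind fun a => K a) T).toReal - ((νs.bind fun a => K a) T).toReal| ≤
          γ * c ^ n := by
      intro n
      haveI := hσprob n
      have hg : Measurable fun x => K x T := Kernel.measurable_coe _ hT
      have hga : ∀ x, ENNReal.ofReal ε * η T ≤ K x T := fun x => (hKset hKH hT x).1
      have hgb : ∀ x, K x T ≤ ENNReal.ofReal γ * η T := fun x => (hKset hKH hT x).2
      have hab : ENNReal.ofReal ε * η T ≤ ENNReal.ofReal γ * η T :=
        mul_le_mul_left (ENNReal.ofReal_le_ofReal hεγ.le) _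
      have hbtop : ENNReal.ofReal γ * η T ≠ ⊤ :=
        ENNReal.mul_ne_top ENNReal.ofReal_ne_top (measure_ne_top _ _)
      have hmass : σ n Set.univ = νs Set.univ := by rw [measure_univ, measure_univ]
      have h1 := hahn_comp (σ n) νs hmass hg hab hbtop hga hgb
        (A := ENNReal.ofReal (c ^ n)) (fun T' hT' => (hAn n T' hT').1)
      have h2 := hahn_comp νs (σ n) hmass.symm hg hab hbtop hga hgb
        (A := ENNReal.ofReal (c ^ n)) (fun T' hT' => (hAn n T' hT').2)
      rw [← Measure.bind_apply hT K.measurable.aemeasurable, ← Measure.bind_apply hT K.measurable.aemeasurable] at h1 h2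
      have hbA : (ENNReal.ofReal γ * η T - ENNReal.ofReal ε * η T) * ENNReal.ofReal (c ^ n) ≤
          ENNReal.ofReal (γ * c ^ n) := by
        calc (ENNReal.ofReal γ * η T - ENNReal.ofReal ε * η T) * ENNReal.ofReal (c ^ n) ≤
              (ENNReal.ofReal γ * η T) * ENNReal.ofReal (c ^ n) :=
              mul_le_mul_left tsub_le_self _
          _ ≤ (ENNReal.ofReal γ * 1) * ENNReal.ofReal (c ^ n) :=
              mul_le_mul_left (mul_le_mul_right prob_le_one _) _
          _ = ENNReal.ofReal γ * ENNReal.ofReal (c ^ n) := by rw [mul_one]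
          _ = ENNReal.ofReal (γ * c ^ n) := (ENNReal.ofReal_mul hγ0.le).symm
      refine real_diff_le ?_ ?_ (by positivity) ?_ ?_
      · exact ((hbind_ub (σ n) inferInstance T hT).trans_lt ENNReal.ofReal_lt_top).ne
      · exact ((hbind_ub νs inferInstance T hT).trans_lt ENNReal.ofReal_lt_top).ne
      · exact h1.trans (add_le_add le_rfl hbA)
      · exact h2.trans (add_le_add le_rfl hbA)
    have h0 : Tendsto (fun n => γ * c ^ n) atTop (𝓝 0) := by
      have := (tendsto_pow_atTop_nhds_zero_of_lt_one hc0.le hc1).const_mul γ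
      simpa using this
    have := squeeze_zero_norm (fun n => by
      rw [Real.norm_eq_abs]; exact hbound n) h0
    exact tendsto_sub_nhds_zero_iff.mp this
  -- νs is a fixed point
  haveI hfkνs : IsProbabilityMeasure (FKker K νs) := fk_prob hε hεγ hKH νs
  have hfix : FKker K νs = νs := by
    ext S hS
    have hDlb : ENNReal.ofReal ε ≤ (νs.bind fun a => K a) Set.univ :=
      (bindK_univ_bounds hKH νs).1
    have hDfin : (νs.bind fun a => K a) Set.univ ≠ ⊤ :=
      ((hbind_ub νs inferInstance Set.univ MeasurableSet.univ).trans_lt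
        ENNReal.ofReal_lt_top).ne
    have hDne0 : (((νs.bind fun a => K a) Set.univ).toReal) ≠ 0 := by
      have : ε ≤ ((νs.bind fun a => K a) Set.univ).toReal := by
        have := ENNReal.toReal_mono hDfin hDlb
        rwa [ENNReal.toReal_ofReal hε.le] at this
      exact (hε.trans_le this).ne'
    have hform : ∀ (μ : Measure (Torus d)),
        ((FKker K μ) S).toReal =
          (((μ.bind fun a => K a) Set.univ).toReal)⁻¹ *
            ((μ.bind fun a => K a) S).toReal := by
      intro μ
      rw [FKker, Measure.smul_apply, smul_eq_mul, ENNReal.toReal_mul, ENNReal.toReal_inv]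
    have hLHS : Tendsto (fun n => ((σ (n + 1)) S).toReal) atTop (𝓝 ((νs S).toReal)) := by
      rw [hνs_toReal S hS]
      exact (hlimF S hS).comp (tendsto_add_atTop_nat 1)
    have hRHS : Tendsto (fun n => ((σ (n + 1)) S).toReal) atTop
        (𝓝 (((FKker K νs) S).toReal)) := by
      have hrw : ∀ n, ((σ (n + 1)) S).toReal =
          ((((σ n).bind fun a => K a) Set.univ).toReal)⁻¹ *
            ((((σ n).bind fun a => K a)) S).toReal := by
        intro n
        have : σ (n + 1) = FKker K (σ n) := Function.iterate_succ_apply' _ n η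
        rw [this, hform (σ n)]
      simp_rw [hrw, hform νs]
      exact Tendsto.mul ((hbindTend Set.univ MeasurableSet.univ).inv₀ hDne0)
        (hbindTend S hS)
    have heq := tendsto_nhds_unique hRHS hLHS
    exact (ENNReal.toReal_eq_toReal_iff' (measure_ne_top _ _) (measure_ne_top _ _)).mp heq
  -- uniqueness
  have huniq : ∀ μ : Measure (Torus d), IsProbabilityMeasure μ → FKker K μ = μ → μ = νs := by
    intro μ hμ hfixμ
    ext S hS
    have hit : ∀ n : ℕ, (FKker K)^[n] μ = μ := fun n => Function.iterate_fixed hfixμ n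
    have hb : ∀ n : ℕ, |(μ S).toReal - (νs S).toReal| ≤ c ^ n := by
      intro n
      have := hGEN μ hμ n S hS
      rwa [hit n] at this
    have h0 : |(μ S).toReal - (νs S).toReal| ≤ 0 :=
      ge_of_tendsto' (tendsto_pow_atTop_nhds_zero_of_lt_one hc0.le hc1) hb
    haveI := hμ
    have heq : (μ S).toReal = (νs S).toReal := by
      have := abs_nonpos_iff.mp h0
      linarith [sub_eq_zero.mp this]
    exact (ENNReal.toReal_eq_toReal_iff' (measure_ne_top _ _) (measure_ne_top _ _)).mp heq
  -- conclusion
  refine ⟨νs, hνsprob, hfix, huniq, ?_⟩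
  intro ν₀ hν₀ n
  have hsup : (⨆ S : {S : Set (Torus d) // MeasurableSet S},
      |(((FKker K)^[n] ν₀) S.1).toReal - (νs S.1).toReal|) ≤ c ^ n :=
    Real.iSup_le (fun Sp => hGEN ν₀ hν₀ n Sp.1 Sp.2) (pow_nonneg hc0.le n)
  rw [tvDist]
  calc 2 * (⨆ S : {S : Set (Torus d) // MeasurableSet S},
        |(((FKker K)^[n] ν₀) S.1).toReal - (νs S.1).toReal|) ≤ 2 * c ^ n := by linarith
    _ = 2 * (1 - ε / γ) ^ n := by rw [hcdef]

end
end

section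
/- Let A(t) = κΔ + b(t,x)·∇ + c(t,x) with b, c smooth and bounded, where ||b||_∞ ≤ M₁, ||c||_∞ ≤ M₂, ||∇c||_∞ ≤ M₃. Then there exists γ₁ > 0, depending only on κ, M₁, M₂, M₃, such that for every periodic v in H²(T^d), ||(A(t) − γ₁)v||_{L²} ≥ C(κ,b,c)(||Δv||_{L²} + ||v||_{L²}) for some positive constant C(κ,b,c). -/
/-!
STATEMENT 7: Let `A(t) = κΔ + b(t,x)·∇ + c(t,x)` with `b`, `c` smooth and bounded,
`‖b‖_∞ ≤ M₁`, `‖c‖_∞ ≤ M₂`, `‖∇c‖_∞ ≤ M₃`. Then there exists `γ₁ > 0`, depending only on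
`κ, M₁, M₂, M₃`, such that for every periodic `v ∈ H²(T^d)` (represented by smooth periodic
`v`), `‖(A(t) − γ₁)v‖_{L²} ≥ C(κ,b,c)(‖Δv‖_{L²} + ‖v‖_{L²})` for some `C(κ,b,c) > 0`.
-/

open MeasureTheory

noncomputable section

/-- The `i`-th partial derivative. -/
def pd {d : ℕ} (i : Fin d) (f : (Fin d → ℝ) → ℝ) (x : Fin d → ℝ) : ℝ :=
  fderiv ℝ f x (Pi.single i 1)

/-- The Laplacian `Δf = ∑ᵢ ∂ᵢ∂ᵢ f`. -/
def lap {d : ℕ} (f : (Fin d → ℝ) → ℝ) (x : Fin d → ℝ) : ℝ :=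
  ∑ i, pd i (pd i f) x

/-- The fundamental cell `[0,1]^d` of the torus. -/
def cube (d : ℕ) : Set (Fin d → ℝ) := Set.univ.pi fun _ => Set.Icc (0 : ℝ) 1

/-- The `L²(T^d)` norm of a scalar function. -/
def l2norm {d : ℕ} (f : (Fin d → ℝ) → ℝ) : ℝ :=
  Real.sqrt (∫ x in cube d, (f x) ^ 2)

/-- Periodicity with respect to the integer lattice `ℤ^d`. -/
def PeriodicFn {d : ℕ} {E : Type*} (f : (Fin d → ℝ) → E) : Prop :=
  ∀ (x : Fin d → ℝ) (k : Fin d → ℤ), f (x + fun i => (k i : ℝ)) = f x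

/-- The operator `A(t) v = κΔv + b(t,·)·∇v + c(t,·)v`. -/
def Aop {d : ℕ} (κ : ℝ) (b : ℝ → (Fin d → ℝ) → (Fin d → ℝ)) (c : ℝ → (Fin d → ℝ) → ℝ)
    (t : ℝ) (v : (Fin d → ℝ) → ℝ) (x : Fin d → ℝ) : ℝ :=
  κ * lap v x + (∑ i, b t x i * pd i v x) + c t x * v x

namespace Stmt7Aux

variable {d : ℕ}

lemma cube_eq : cube d = Set.Icc (0 : Fin d → ℝ) 1 := by
  rw [← Set.pi_univ_Icc]; rfl

lemma isCompact_cube : IsCompact (cube d) := by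
  rw [cube_eq]; exact isCompact_Icc

lemma measurableSet_cube : MeasurableSet (cube d) := by
  rw [cube_eq]; exact measurableSet_Icc

lemma integrableOn_cube {f : (Fin d → ℝ) → ℝ} (hf : Continuous f) :
    IntegrableOn f (cube d) :=
  hf.continuousOn.integrableOn_compact isCompact_cube

lemma l2norm_nonneg (f : (Fin d → ℝ) → ℝ) : 0 ≤ l2norm f := Real.sqrt_nonneg _

lemma sq_l2norm {f : (Fin d → ℝ) → ℝ} :
    l2norm f ^ 2 = ∫ x in cube d, f x ^ 2 :=
  Real.sq_sqrt (setIntegral_nonneg measurableSet_cube fun _ _ => sq_nonneg _)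

lemma memℒp_two {f : (Fin d → ℝ) → ℝ} (hf : Continuous f) :
    MemLp f (ENNReal.ofReal 2) (volume.restrict (cube d)) := by
  haveI : IsFiniteMeasure (volume.restrict (cube d)) :=
    ⟨by simpa [Measure.restrict_apply_univ] using (isCompact_cube (d := d)).measure_lt_top⟩
  obtain ⟨C, hC⟩ := (isCompact_cube (d := d)).exists_bound_of_continuousOn hf.continuousOn
  exact MemLp.of_bound hf.aestronglyMeasurable.restrict C
    ((ae_restrict_iff' measurableSet_cube).2 (ae_of_all _ hC))

lemma cs_nonneg {f g : (Fin d → ℝ) → ℝ} (hf : Continuous f) (hg : Continuous g)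
    (hf0 : ∀ x, 0 ≤ f x) (hg0 : ∀ x, 0 ≤ g x) :
    ∫ x in cube d, f x * g x ≤ l2norm f * l2norm g := by
  have hpq : Real.HolderConjugate 2 2 := Real.HolderConjugate.two_two
  have h := integral_mul_le_Lp_mul_Lq_of_nonneg (μ := volume.restrict (cube d)) hpq
    (ae_of_all _ hf0) (ae_of_all _ hg0) (memℒp_two hf) (memℒp_two hg)
  simp only [Real.rpow_two] at h
  refine h.trans_eq ?_
  rw [l2norm, l2norm, Real.sqrt_eq_rpow, Real.sqrt_eq_rpow]

lemma l2norm_abs {f : (Fin d → ℝ) → ℝ} : l2norm (fun x => |f x|) = l2norm f := by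
  simp [l2norm, sq_abs]

lemma cs_abs {f g : (Fin d → ℝ) → ℝ} (hf : Continuous f) (hg : Continuous g) :
    |∫ x in cube d, f x * g x| ≤ l2norm f * l2norm g := by
  have h1 : |∫ x in cube d, f x * g x| ≤ ∫ x in cube d, |f x| * |g x| := by
    simpa [Real.norm_eq_abs, abs_mul] using
      norm_integral_le_integral_norm (μ := volume.restrict (cube d)) (fun x => f x * g x)
  calc |∫ x in cube d, f x * g x| ≤ ∫ x in cube d, |f x| * |g x| := h1
    _ ≤ l2norm (fun x => |f x|) * l2norm (fun x => |g x|) :=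
        cs_nonneg hf.abs hg.abs (fun x => abs_nonneg _) (fun x => abs_nonneg _)
    _ = l2norm f * l2norm g := by rw [l2norm_abs, l2norm_abs]

lemma l2norm_add_le {f g : (Fin d → ℝ) → ℝ} (hf : Continuous f) (hg : Continuous g) :
    l2norm (fun x => f x + g x) ≤ l2norm f + l2norm g := by
  have e1 : (∫ x in cube d, (f x + g x) ^ 2)
      = (∫ x in cube d, f x ^ 2) + ((∫ x in cube d, 2 * (f x * g x)) + ∫ x in cube d, g x ^ 2) := by
    rw [← integral_add (integrableOn_cube (by continuity)) (integrableOn_cube (by continuity)),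
      ← integral_add (integrableOn_cube (by continuity)) (by
        exact ((integrableOn_cube (f := fun x => 2*(f x * g x)) (by continuity))).add
          (integrableOn_cube (by continuity)))]
    apply integral_congr_ae; filter_upwards with x; ring
  have h2 : (∫ x in cube d, 2 * (f x * g x)) ≤ 2 * (l2norm f * l2norm g) := by
    rw [integral_const_mul]
    have := (le_abs_self (∫ x in cube d, f x * g x)).trans (cs_abs hf hg)
    linarith
  have h3 : (∫ x in cube d, (f x + g x) ^ 2) ≤ (l2norm f + l2norm g) ^ 2 := by
    have hf2 : (∫ x in cube d, f x ^ 2) = l2norm f ^ 2 := sq_l2norm.symm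
    have hg2 : (∫ x in cube d, g x ^ 2) = l2norm g ^ 2 := sq_l2norm.symm
    rw [e1, hf2, hg2]; nlinarith [h2]
  have := Real.sqrt_le_sqrt h3
  rwa [Real.sqrt_sq (add_nonneg (l2norm_nonneg f) (l2norm_nonneg g))] at this

lemma l2norm_le_of_sq_le {f g : (Fin d → ℝ) → ℝ} {a : ℝ} (hf : Continuous f) (hg : Continuous g)
    (ha : 0 ≤ a) (h : ∀ x, f x ^ 2 ≤ a ^ 2 * g x ^ 2) : l2norm f ≤ a * l2norm g := by
  have h1 : (∫ x in cube d, f x ^ 2) ≤ a ^ 2 * ∫ x in cube d, g x ^ 2 := by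
    rw [← integral_const_mul]
    exact setIntegral_mono_on (integrableOn_cube (by continuity))
      (integrableOn_cube (by continuity)) measurableSet_cube (fun x _ => h x)
  have h2 := Real.sqrt_le_sqrt h1
  rw [Real.sqrt_mul (sq_nonneg a), Real.sqrt_sq ha] at h2
  exact h2

lemma l2norm_eq_of_sq_eq {f g : (Fin d → ℝ) → ℝ} (h : ∀ x, f x ^ 2 = g x ^ 2) :
    l2norm f = l2norm g := by
  unfold l2norm; congr 1; exact integral_congr_ae (Filter.Eventually.of_forall fun x => h x)

lemma contDiff_pd {f : (Fin d → ℝ) → ℝ} {m n : WithTop ℕ∞} (hf : ContDiff ℝ n f)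
    (hmn : m + 1 ≤ n) (i : Fin d) : ContDiff ℝ m (pd i f) :=
  (hf.fderiv_right hmn).clm_apply contDiff_const

lemma continuous_pd {f : (Fin d → ℝ) → ℝ} {n : WithTop ℕ∞} (hf : ContDiff ℝ n f) (hn : 1 ≤ n)
    (i : Fin d) : Continuous (pd i f) :=
  (contDiff_pd (m := 0) hf (by simpa using hn) i).continuous

lemma pd_mul {f g : (Fin d → ℝ) → ℝ} {x : Fin d → ℝ} (hf : DifferentiableAt ℝ f x)
    (hg : DifferentiableAt ℝ g x) (i : Fin d) :
    pd i (fun y => f y * g y) x = pd i f x * g x + f x * pd i g x := by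
  unfold pd
  rw [fderiv_fun_mul hf hg]
  simp [ContinuousLinearMap.add_apply, ContinuousLinearMap.smul_apply, smul_eq_mul]
  ring

lemma fderiv_periodic {f : (Fin d → ℝ) → ℝ} (hf : Differentiable ℝ f) (hp : PeriodicFn f)
    (x : Fin d → ℝ) (k : Fin d → ℤ) :
    fderiv ℝ f (x + fun i => (k i : ℝ)) = fderiv ℝ f x := by
  set c : Fin d → ℝ := fun i => (k i : ℝ) with hc
  have h1 : (fun y => f (y + c)) = f := funext fun y => hp y k
  have hid : HasFDerivAt (fun y : Fin d → ℝ => y + c)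
      (ContinuousLinearMap.id ℝ (Fin d → ℝ)) x := (hasFDerivAt_id x).add_const c
  have h2 : HasFDerivAt (fun y => f (y + c)) (fderiv ℝ f (x + c)) x := by
    simpa [Function.comp_def] using ((hf (x + c)).hasFDerivAt).comp x hid
  rw [h1] at h2
  exact h2.fderiv.symm

lemma pd_periodic {f : (Fin d → ℝ) → ℝ} (hf : Differentiable ℝ f) (hp : PeriodicFn f)
    (i : Fin d) : PeriodicFn (pd i f) := by
  intro x k
  unfold pd
  rw [fderiv_periodic hf hp x k]

lemma insertNth_one_eq {n : ℕ} (i : Fin (n + 1)) (x : Fin n → ℝ) :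
    Fin.insertNth i (1 : ℝ) x
      = Fin.insertNth i (0 : ℝ) x + fun j => ((Pi.single i 1 : Fin (n+1) → ℤ) j : ℝ) := by
  funext j
  refine Fin.succAboveCases i ?_ ?_ j
  · simp
  · intro m
    simp [Fin.succAbove_ne i m, Pi.single_eq_of_ne (Fin.succAbove_ne i m)]

lemma int_pd_eq_zero {n : ℕ} {g : (Fin (n + 1) → ℝ) → ℝ} (hg : ContDiff ℝ 1 g)
    (hp : PeriodicFn g) (i : Fin (n + 1)) :
    ∫ x in cube (n + 1), pd i g x = 0 := by
  classical
  set f : Fin (n+1) → (Fin (n+1) → ℝ) → ℝ := fun j => if j = i then g else 0 with hf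
  set f' : Fin (n+1) → (Fin (n+1) → ℝ) → (Fin (n+1) → ℝ) →L[ℝ] ℝ :=
    fun j x => if j = i then fderiv ℝ g x else 0 with hf'
  have key := integral_divergence_of_hasFDerivAt_off_countable'
    (a := (0 : Fin (n+1) → ℝ)) (b := 1) (fun j => zero_le_one) f f' ∅ Set.countable_empty
    (fun j => by
      by_cases h : j = i
      · simpa [hf, h] using hg.continuous.continuousOn
      · simp [hf, h]; exact continuousOn_const)
    (fun x _ j => by
      by_cases h : j = i
      · simpa [hf, hf', h] using ((hg.differentiable one_ne_zero) x).hasFDerivAt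
      · simp only [hf, hf', if_neg h]; exact hasFDerivAt_const (0:ℝ) x)
    (by
      have : (fun x : Fin (n+1) → ℝ => ∑ j, f' j x (Pi.single j 1)) = pd i g := by
        funext x
        rw [Finset.sum_eq_single i]
        · simp [hf', pd]
        · intro j _ hj; simp [hf', hj]
        · intro h; exact absurd (Finset.mem_univ i) h
      rw [this, ← cube_eq]
      exact integrableOn_cube (continuous_pd hg le_rfl i))
  have hsum : (fun x : Fin (n+1) → ℝ => ∑ j, f' j x (Pi.single j 1)) = pd i g := by
    funext x
    rw [Finset.sum_eq_single i]
    · simp [hf', pd]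
    · intro j _ hj; simp [hf', hj]
    · intro h; exact absurd (Finset.mem_univ i) h
  rw [hsum] at key
  rw [cube_eq, key]
  apply Finset.sum_eq_zero
  intro j _
  by_cases h : j = i
  · subst h
    have : ∀ x : Fin n → ℝ, f j (Fin.insertNth j (1:ℝ) x) = f j (Fin.insertNth j (0:ℝ) x) := by
      intro x
      simp only [hf, if_pos rfl]
      rw [insertNth_one_eq]
      exact hp _ _
    rw [sub_eq_zero]
    exact integral_congr_ae (Filter.Eventually.of_forall fun x => this x)
  · simp [hf, h]

lemma int_mul_pd2 {v : (Fin d → ℝ) → ℝ} (hv : ContDiff ℝ 2 v) (hp : PeriodicFn v)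
    (i : Fin d) :
    ∫ x in cube d, v x * pd i (pd i v) x = -∫ x in cube d, (pd i v x) ^ 2 := by
  cases d with
  | zero => exact i.elim0
  | succ n =>
    have hv1 : ContDiff ℝ 1 (pd i v) := contDiff_pd hv (by norm_num) i
    have hdv : Differentiable ℝ v := hv.differentiable (by norm_num)
    have hdpd : Differentiable ℝ (pd i v) := hv1.differentiable one_ne_zero
    set g : (Fin (n+1) → ℝ) → ℝ := fun x => v x * pd i v x with hg
    have hgc : ContDiff ℝ 1 g := (hv.of_le (by norm_num)).mul hv1
    have hgp : PeriodicFn g := by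
      intro x k
      simp only [hg]
      rw [hp x k, pd_periodic hdv hp i x k]
    have hz := int_pd_eq_zero hgc hgp i
    have hptwise : ∀ x, pd i g x = (pd i v x) ^ 2 + v x * pd i (pd i v) x := by
      intro x
      rw [pd_mul (hdv x) (hdpd x) i]
      ring
    have hsplit : (∫ x in cube (n+1), pd i g x)
        = (∫ x in cube (n+1), (pd i v x) ^ 2) + ∫ x in cube (n+1), v x * pd i (pd i v) x := by
      rw [← integral_add (f := fun x => pd i v x ^ 2) (g := fun x => v x * pd i (pd i v) x)
        (integrableOn_cube (hv1.continuous.pow 2))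
        (integrableOn_cube (hv.continuous.mul (continuous_pd hv1 le_rfl i)))]
      exact integral_congr_ae (Filter.Eventually.of_forall fun x => hptwise x)
    rw [hz] at hsplit
    linarith [hsplit]

lemma int_mul_lap {v : (Fin d → ℝ) → ℝ} (hv : ContDiff ℝ 2 v) (hp : PeriodicFn v) :
    ∫ x in cube d, v x * lap v x = -∑ i, ∫ x in cube d, (pd i v x) ^ 2 := by
  have h1 : (∫ x in cube d, v x * lap v x)
      = ∑ i, ∫ x in cube d, v x * pd i (pd i v) x := by
    rw [← integral_finsetSum _ (f := fun i x => v x * pd i (pd i v) x) (fun i _ => integrableOn_cube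
      (hv.continuous.mul (continuous_pd (contDiff_pd hv (by norm_num) i) le_rfl i)))]
    apply integral_congr_ae
    filter_upwards with x
    rw [lap, Finset.mul_sum]
  rw [h1, ← Finset.sum_neg_distrib]
  exact Finset.sum_congr rfl fun i _ => int_mul_pd2 hv hp i

lemma two_mul_le_add_of_sq_le {p q r : ℝ} (hp : 0 ≤ p) (hq : 0 ≤ q) (hr : 0 ≤ r)
    (h : r ^ 2 ≤ p * q) : 2 * r ≤ p + q := by
  have h1 : (2 * r) ^ 2 ≤ (p + q) ^ 2 := by nlinarith [sq_nonneg (p - q)]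
  have h2 := Real.sqrt_le_sqrt h1
  rwa [Real.sqrt_sq (by linarith), Real.sqrt_sq (by linarith)] at h2

end Stmt7Aux

open Stmt7Aux

set_option maxHeartbeats 1000000 in
theorem stmt7 {d : ℕ} (κ M₁ M₂ M₃ : ℝ) (hκ : 0 < κ) :
    ∃ γ₁ : ℝ, 0 < γ₁ ∧
      ∀ (b : ℝ → (Fin d → ℝ) → (Fin d → ℝ)) (c : ℝ → (Fin d → ℝ) → ℝ),
        (∀ t, ContDiff ℝ (⊤ : ℕ∞) (b t)) → (∀ t, ContDiff ℝ (⊤ : ℕ∞) (c t)) →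
        (∀ t, PeriodicFn (b t)) → (∀ t, PeriodicFn (c t)) →
        (∀ t x, ‖b t x‖ ≤ M₁) → (∀ t x, |c t x| ≤ M₂) →
        (∀ t x i, |pd i (c t) x| ≤ M₃) →
        ∃ C : ℝ, 0 < C ∧
          ∀ t : ℝ, ∀ v : (Fin d → ℝ) → ℝ, ContDiff ℝ 2 v → PeriodicFn v →
            C * (l2norm (lap v) + l2norm v) ≤
              l2norm (fun x => Aop κ b c t v x - γ₁ * v x) := by
  have hd0 : (0:ℝ) ≤ (d:ℝ) := Nat.cast_nonneg d
  have hquot : (0:ℝ) ≤ (d : ℝ) * M₁ ^ 2 / κ := div_nonneg (by positivity) hκ.le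
  refine ⟨|M₂| + (d : ℝ) * M₁ ^ 2 / κ + 1,
    by have := abs_nonneg M₂; linarith, ?_⟩
  set γ₁ : ℝ := |M₂| + (d : ℝ) * M₁ ^ 2 / κ + 1 with hγdef
  intro b c hbs hcs hbp hcp hM1 hM2 _
  have hM1' : 0 ≤ M₁ := le_trans (norm_nonneg _) (hM1 0 0)
  have hM2' : 0 ≤ M₂ := le_trans (abs_nonneg _) (hM2 0 0)
  have hγ0 : 0 < γ₁ := by rw [hγdef]; have := abs_nonneg M₂; linarith
  set Mb : ℝ := Real.sqrt d * M₁ with hMbdef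
  have hMb : 0 ≤ Mb := mul_nonneg (Real.sqrt_nonneg _) hM1'
  have hMb2 : Mb ^ 2 = (d:ℝ) * M₁ ^ 2 := by
    rw [hMbdef, mul_pow, Real.sq_sqrt hd0]
  have hγ1 : M₂ + Mb ^ 2 / κ + 1 ≤ γ₁ := by
    rw [hγdef, hMb2]
    have := le_abs_self M₂
    linarith
  have hM2γ : (0:ℝ) ≤ M₂ + γ₁ := by linarith
  set N : ℝ := 2 * κ + Mb ^ 2 + 2 * κ * (M₂ + γ₁) with hNdef
  have hN0 : 0 ≤ N := by
    rw [hNdef]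
    have h1 : (0:ℝ) ≤ 2 * κ * (M₂ + γ₁) := mul_nonneg (by linarith) hM2γ
    nlinarith [sq_nonneg Mb]
  set K : ℝ := N / κ ^ 2 + 1 with hKdef
  have hden : 0 < K := by
    rw [hKdef]
    have : (0:ℝ) ≤ N / κ ^ 2 := div_nonneg hN0 (sq_nonneg κ)
    linarith
  refine ⟨1 / K, by positivity, ?_⟩
  intro t v hv hvp
  -- continuity facts
  have cv : Continuous v := hv.continuous
  have hv1 : ∀ i, ContDiff ℝ 1 (pd i v) := fun i => contDiff_pd hv (by norm_num) i
  have cpd : ∀ i : Fin d, Continuous (pd i v) := fun i => (hv1 i).continuous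
  have cpdd : ∀ i : Fin d, Continuous (pd i (pd i v)) := fun i => continuous_pd (hv1 i) le_rfl i
  have clap : Continuous (lap v) := continuous_finset_sum _ fun i _ => cpdd i
  have cb : Continuous (b t) := (hbs t).continuous
  have cbi : ∀ i : Fin d, Continuous fun x => b t x i := fun i => (continuous_apply i).comp cb
  have cc : Continuous (c t) := (hcs t).continuous
  set B : (Fin d → ℝ) → ℝ := fun x => ∑ i, b t x i * pd i v x with hBdef
  have cB : Continuous B := continuous_finset_sum _ fun i _ => (cbi i).mul (cpd i)
  set w : (Fin d → ℝ) → ℝ := fun x => Real.sqrt (∑ i, (pd i v x) ^ 2) with hwdef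
  have cw : Continuous w := (continuous_finset_sum _ fun i _ => (cpd i).pow 2).sqrt
  have hw2 : ∀ x, w x ^ 2 = ∑ i, (pd i v x) ^ 2 := fun x =>
    Real.sq_sqrt (Finset.sum_nonneg fun i _ => sq_nonneg _)
  have cA : Continuous (fun x => Aop κ b c t v x) := by
    simp only [Aop]
    exact ((continuous_const.mul clap).add cB).add (cc.mul cv)
  have cAg : Continuous (fun x => Aop κ b c t v x - γ₁ * v x) := cA.sub (continuous_const.mul cv)
  set V : ℝ := l2norm v with hVdef
  set D : ℝ := l2norm (lap v) with hDdef
  set G : ℝ := l2norm w with hGdef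
  set R : ℝ := l2norm (fun x => Aop κ b c t v x - γ₁ * v x) with hRdef
  have hV0 : 0 ≤ V := l2norm_nonneg _
  have hD0 : 0 ≤ D := l2norm_nonneg _
  have hG0 : 0 ≤ G := l2norm_nonneg _
  have hR0 : 0 ≤ R := l2norm_nonneg _
  have hG2 : G ^ 2 = ∑ i, ∫ x in cube d, (pd i v x) ^ 2 := by
    rw [hGdef, sq_l2norm,
      ← integral_finsetSum _ (f := fun i x => pd i v x ^ 2) (fun i _ => integrableOn_cube ((cpd i).pow 2))]
    exact integral_congr_ae (Filter.Eventually.of_forall fun x => hw2 x)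
  have hparts : (∫ x in cube d, v x * lap v x) = -(G ^ 2) := by
    rw [hG2]; exact int_mul_lap hv hvp
  -- pointwise bound on the drift term
  have hBw : ∀ x, B x ^ 2 ≤ Mb ^ 2 * w x ^ 2 := by
    intro x
    rw [hw2, hMb2]
    calc B x ^ 2 ≤ (∑ i, (b t x i) ^ 2) * ∑ i, (pd i v x) ^ 2 :=
          Finset.sum_mul_sq_le_sq_mul_sq _ _ _
      _ ≤ ((d : ℝ) * M₁ ^ 2) * ∑ i, (pd i v x) ^ 2 := by
          refine mul_le_mul_of_nonneg_right ?_ (Finset.sum_nonneg fun i _ => sq_nonneg _)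
          calc (∑ i, (b t x i) ^ 2) ≤ ∑ _i : Fin d, M₁ ^ 2 := by
                refine Finset.sum_le_sum fun i _ => ?_
                have h1 : |b t x i| ≤ M₁ :=
                  le_trans (by simpa [Real.norm_eq_abs] using norm_le_pi_norm (b t x) i) (hM1 t x)
                calc (b t x i) ^ 2 = |b t x i| ^ 2 := (sq_abs _).symm
                  _ ≤ M₁ ^ 2 := pow_le_pow_left₀ (abs_nonneg _) h1 2
            _ = (d : ℝ) * M₁ ^ 2 := by
                rw [Finset.sum_const, Finset.card_univ, Fintype.card_fin, nsmul_eq_mul]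
  have hBG : l2norm B ≤ Mb * G := l2norm_le_of_sq_le cB cw hMb hBw
  -- Estimate (1)
  have e1 : κ * G ^ 2 + (γ₁ - M₂) * V ^ 2 - Mb * G * V ≤ R * V := by
    have hsplit : (∫ x in cube d, (γ₁ * v x - Aop κ b c t v x) * v x)
        = (-(κ * ∫ x in cube d, v x * lap v x) - ∫ x in cube d, B x * v x)
          + ∫ x in cube d, (γ₁ - c t x) * v x ^ 2 := by
      have hintg : (fun x => (γ₁ * v x - Aop κ b c t v x) * v x)
          = fun x => (-(κ * (v x * lap v x)) - B x * v x) + (γ₁ - c t x) * v x ^ 2 := by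
        funext x; simp only [Aop, hBdef]; ring
      have hI1 : IntegrableOn (fun x => -(κ * (v x * lap v x)) - B x * v x) (cube d) :=
        integrableOn_cube (((continuous_const.mul (cv.mul clap)).neg).sub (cB.mul cv))
      have hI2 : IntegrableOn (fun x => (γ₁ - c t x) * v x ^ 2) (cube d) :=
        integrableOn_cube ((continuous_const.sub cc).mul (cv.pow 2))
      have hI3 : IntegrableOn (fun x => -(κ * (v x * lap v x))) (cube d) :=
        integrableOn_cube ((continuous_const.mul (cv.mul clap)).neg)
      have hI4 : IntegrableOn (fun x => B x * v x) (cube d) :=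
        integrableOn_cube (cB.mul cv)
      rw [hintg, integral_add hI1 hI2, integral_sub hI3 hI4, integral_neg, integral_const_mul]
    have hcs1 : (∫ x in cube d, (γ₁ * v x - Aop κ b c t v x) * v x) ≤ R * V := by
      have h := (le_abs_self _).trans
        (cs_abs (g := v) (f := fun x => γ₁ * v x - Aop κ b c t v x)
          ((continuous_const.mul cv).sub cA) cv)
      have heq : l2norm (fun x => γ₁ * v x - Aop κ b c t v x) = R := by
        rw [hRdef]
        exact l2norm_eq_of_sq_eq fun x => by ring
      rwa [heq] at h
    have hBv : (∫ x in cube d, B x * v x) ≤ Mb * G * V := by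
      have h2 := cs_abs cB cv
      rw [← hVdef] at h2
      have h3 : l2norm B * V ≤ Mb * G * V := mul_le_mul_of_nonneg_right hBG hV0
      have h4 := le_abs_self (∫ x in cube d, B x * v x)
      linarith
    have hcv : (γ₁ - M₂) * V ^ 2 ≤ ∫ x in cube d, (γ₁ - c t x) * v x ^ 2 := by
      rw [hVdef, sq_l2norm, ← integral_const_mul]
      refine setIntegral_mono_on (integrableOn_cube (continuous_const.mul (cv.pow 2)))
        (integrableOn_cube ((continuous_const.sub cc).mul (cv.pow 2)))
        measurableSet_cube (fun x _ => ?_)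
      have hc := (abs_le.mp (hM2 t x)).2
      exact mul_le_mul_of_nonneg_right (by linarith) (sq_nonneg _)
    rw [hparts] at hsplit
    nlinarith [hsplit, hcs1, hBv, hcv]
  -- Estimate (2)
  have e2 : G ^ 2 ≤ V * D := by
    have h := cs_abs cv clap
    rw [← hVdef, ← hDdef] at h
    have h2 : G ^ 2 = -(∫ x in cube d, v x * lap v x) := by rw [hparts]; ring
    have h3 := neg_le_abs (∫ x in cube d, v x * lap v x)
    linarith
  -- Estimate (3)
  have e3 : κ * D ≤ R + Mb * G + (M₂ + γ₁) * V := by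
    have h1 : l2norm (fun x => κ * lap v x) = κ * D := by
      rw [hDdef]
      have : κ * l2norm (lap v) = |κ| * l2norm (lap v) := by rw [abs_of_pos hκ]
      rw [this, l2norm, l2norm, ← Real.sqrt_sq_eq_abs, ← Real.sqrt_mul (sq_nonneg κ),
        ← integral_const_mul]
      congr 1
      exact integral_congr_ae (Filter.Eventually.of_forall fun x => by ring)
    have hdecomp : (fun x => κ * lap v x)
        = fun x => (Aop κ b c t v x - γ₁ * v x) + (-B x + (γ₁ - c t x) * v x) := by
      funext x
      simp only [Aop, hBdef]
      ring
    have htri : l2norm (fun x => κ * lap v x)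
        ≤ R + (l2norm (fun x => -B x) + l2norm (fun x => (γ₁ - c t x) * v x)) := by
      rw [hdecomp]
      calc l2norm (fun x => (Aop κ b c t v x - γ₁ * v x) + (-B x + (γ₁ - c t x) * v x))
          ≤ R + l2norm (fun x => -B x + (γ₁ - c t x) * v x) :=
            l2norm_add_le cAg (cB.neg.add ((continuous_const.sub cc).mul cv))
        _ ≤ R + (l2norm (fun x => -B x) + l2norm (fun x => (γ₁ - c t x) * v x)) := by
            have := l2norm_add_le (f := fun x => -B x) (g := fun x => (γ₁ - c t x) * v x)
              cB.neg ((continuous_const.sub cc).mul cv)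
            linarith
    have hnegB : l2norm (fun x => -B x) = l2norm B := l2norm_eq_of_sq_eq fun x => by ring
    have hcvb : l2norm (fun x => (γ₁ - c t x) * v x) ≤ (M₂ + γ₁) * V := by
      refine l2norm_le_of_sq_le ((continuous_const.sub cc).mul cv) cv (by positivity)
        (fun x => ?_)
      have hc := abs_le.mp (hM2 t x)
      have key : (γ₁ - c t x) ^ 2 ≤ (M₂ + γ₁) ^ 2 := by
        nlinarith [mul_nonneg (show (0:ℝ) ≤ c t x + M₂ by linarith [hc.1])
          (show (0:ℝ) ≤ M₂ - c t x + 2 * γ₁ by linarith [hc.2, hγ0.le])]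
      nlinarith [mul_le_mul_of_nonneg_right key (sq_nonneg (v x))]
    rw [h1] at htri
    rw [hnegB] at htri
    linarith [htri, hBG, hcvb, mul_le_mul_of_nonneg_right hBG hG0]
  -- Algebraic endgame
  clear_value γ₁ Mb N K B w V D G R
  have hdivnn : (0:ℝ) ≤ Mb ^ 2 / κ := div_nonneg (sq_nonneg Mb) hκ.le
  have hγ1' : Mb ^ 2 ≤ (γ₁ - M₂ - 1) * κ :=
    (div_le_iff₀ hκ).mp (by linarith [hγ1] : Mb ^ 2 / κ ≤ γ₁ - M₂ - 1)
  have hVR : V ≤ R := by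
    have E1 : 4 * κ * (κ * G ^ 2 + (γ₁ - M₂) * V ^ 2 - Mb * G * V) ≤ 4 * κ * (R * V) :=
      mul_le_mul_of_nonneg_left e1 (by linarith)
    have E2 : 4 * κ * (Mb * G * V) ≤ 4 * κ ^ 2 * G ^ 2 + Mb ^ 2 * V ^ 2 := by
      nlinarith [sq_nonneg (2 * κ * G - Mb * V)]
    have E3 : Mb ^ 2 * V ^ 2 ≤ ((γ₁ - M₂ - 1) * κ) * V ^ 2 :=
      mul_le_mul_of_nonneg_right hγ1' (sq_nonneg V)
    have E4 : V ^ 2 ≤ (γ₁ - M₂) * V ^ 2 := by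
      have h1 : (1:ℝ) ≤ γ₁ - M₂ := by linarith [hγ1, hdivnn]
      nlinarith [mul_le_mul_of_nonneg_right h1 (sq_nonneg V)]
    have E4κ : 3 * κ * V ^ 2 ≤ 3 * κ * ((γ₁ - M₂) * V ^ 2) :=
      mul_le_mul_of_nonneg_left E4 (by linarith)
    have hsqκ : 4 * κ * V ^ 2 ≤ 4 * κ * (R * V) := by linarith [E1, E2, E3, E4κ]
    have hsq : V ^ 2 ≤ R * V := by
      have h4κ : (0:ℝ) < 4 * κ := by linarith
      exact (mul_le_mul_iff_right₀ h4κ).mp hsqκ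
    rcases hV0.eq_or_lt with h | h
    · rw [← h]; exact hR0
    · have hvv : V * V ≤ R * V := by rw [← pow_two]; exact hsq
      exact le_of_mul_le_mul_right hvv h
  have hMbG2 : 2 * κ * (Mb * G) ≤ κ ^ 2 * D + Mb ^ 2 * V := by
    have hpq : (κ * (Mb * G)) ^ 2 ≤ (κ ^ 2 * D) * (Mb ^ 2 * V) := by
      have hcoef : (0:ℝ) ≤ κ ^ 2 * Mb ^ 2 := by positivity
      have := mul_le_mul_of_nonneg_left e2 hcoef
      nlinarith [this]
    have h := two_mul_le_add_of_sq_le (mul_nonneg (sq_nonneg κ) hD0)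
      (mul_nonneg (sq_nonneg Mb) hV0)
      (mul_nonneg hκ.le (mul_nonneg hMb hG0)) hpq
    linarith [h]
  have hDR : κ ^ 2 * D ≤ N * R := by
    have E5 : 2 * κ * (κ * D) ≤ 2 * κ * (R + Mb * G + (M₂ + γ₁) * V) :=
      mul_le_mul_of_nonneg_left e3 (by linarith)
    have E7 : Mb ^ 2 * V ≤ Mb ^ 2 * R := mul_le_mul_of_nonneg_left hVR (sq_nonneg Mb)
    have E8 : 2 * κ * ((M₂ + γ₁) * V) ≤ 2 * κ * ((M₂ + γ₁) * R) :=
      mul_le_mul_of_nonneg_left (mul_le_mul_of_nonneg_left hVR hM2γ) (by linarith)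
    rw [hNdef]
    linarith [E5, E7, E8, hMbG2]
  have hDle : D ≤ N / κ ^ 2 * R := by
    rw [div_mul_eq_mul_div, le_div_iff₀ (show (0:ℝ) < κ ^ 2 by positivity)]
    linarith [hDR]
  have hDV : D + V ≤ K * R := by
    have hKR : K * R = N / κ ^ 2 * R + R := by rw [hKdef]; ring
    rw [hKR]
    linarith [hDle, hVR]
  calc (1 / K) * (D + V) ≤ (1 / K) * (K * R) :=
        mul_le_mul_of_nonneg_left hDV (one_div_nonneg.mpr hden.le)
    _ = R := by
        rw [← mul_assoc, one_div_mul_cancel hden.ne', one_mul]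

end
end
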